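/- Let A and Z be nonempty finite types, n ≥ 1, let W : A → (Z → ℝ) be a channel (for each a, W(·|a) is a PMF on Z), and let Q₀ be a PMF on Z with Q₀(z) > 0 for all z. Let p be a joint PMF on (Fin n → A) × (Fin n → Z) (the joint law of (A₁,…,Aₙ,Z₁,…,Zₙ)) satisfying the memoryless property p(aⁿ, zⁿ) = p_{Aⁿ}(aⁿ)·∏_{i=1}^n W(zᵢ|aᵢ), where p_{Aⁿ} is the marginal on Fin n → A. Then I((A₁,…,Aₙ) ; (Z₁,…,Zₙ)) = ∑_{i=1}^n I(Aᵢ ; Zᵢ) + ∑_{i=1}^n D(p_{Zᵢ} ‖ Q₀) − D(p_{Zⁿ} ‖ Q₀^{⊗n}), where p_{Zᵢ} and p_{Zⁿ} are the corresponding marginals of p and Q₀^{⊗n}(zⁿ) = ∏ᵢ Q₀(zᵢ). In particular, if D(p_{Zⁿ} ‖ Q₀^{⊗n}) ≤ δ then I((A₁,…,Aₙ) ; (Z₁,…,Zₙ)) ≥ ∑_{i=1}^n I(Aᵢ ; Zᵢ) − δ. [Single-letterization step established in the converse proof of Theorem 1 of the paper, equations (58)–(66).] -/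

import Mathlib

open scoped BigOperators

/-- A probability mass function on a finite type: nonnegative and sums to 1. -/
def IsPMF {A : Type*} [Fintype A] (p : A → ℝ) : Prop :=
  (∀ a, 0 ≤ p a) ∧ ∑ a, p a = 1

/-- Shannon entropy (natural log, with `0 * log 0 = 0` by Lean's conventions). -/
noncomputable def entF {A : Type*} [Fintype A] (p : A → ℝ) : ℝ :=
  -∑ a, p a * Real.log (p a)

/-- Kullback–Leibler divergence (natural log, `0 * log (0/q) = 0` by Lean's conventions). -/
noncomputable def klDivF {A : Type*} [Fintype A] (P Q : A → ℝ) : ℝ :=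
  ∑ a, P a * Real.log (P a / Q a)

/-- Pushforward (law of `f` under `p`), i.e. the marginal / induced distribution. -/
noncomputable def pushF {A B : Type*} [Fintype A] [DecidableEq B] (p : A → ℝ) (f : A → B) :
    B → ℝ :=
  fun b => ∑ a, if f a = b then p a else 0

/-- Mutual information `I(X;Y) = H(X) + H(Y) - H(X,Y)` of a joint PMF on a product type. -/
noncomputable def mutInfoF {A B : Type*} [Fintype A] [Fintype B] [DecidableEq A] [DecidableEq B]
    (p : A × B → ℝ) : ℝ :=
  entF (pushF p Prod.fst) + entF (pushF p Prod.snd) - entF p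

/-- Conditional mutual information `I(X;Y|W) = H(X,W) + H(Y,W) - H(X,Y,W) - H(W)` of a joint
PMF on `X × Y × W`. -/
noncomputable def condMIF {X Y W : Type*} [Fintype X] [Fintype Y] [Fintype W]
    [DecidableEq X] [DecidableEq Y] [DecidableEq W] (p : X × Y × W → ℝ) : ℝ :=
  entF (pushF p (fun t => (t.1, t.2.2))) + entF (pushF p (fun t => (t.2.1, t.2.2)))
    - entF p - entF (pushF p (fun t => t.2.2))

/-- Binary entropy function (natural log). -/
noncomputable def binEnt (t : ℝ) : ℝ :=
  -(t * Real.log t) - (1 - t) * Real.log (1 - t)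

/-- The Bernoulli(t) PMF on `ZMod 2`, assigning probability `t` to `1`. -/
noncomputable def bern (t : ℝ) : ZMod 2 → ℝ := fun x => if x = 1 then t else 1 - t

/-! Memorylessness makes the information density of `p` equal to
`∑ᵢ log W(zᵢ|aᵢ) - log p_{Zⁿ}(zⁿ)` on the support of `p`, and makes the single-letter joint
marginals factor as `p_{Aᵢ} · W`, so that the `i`-th single-letter density is
`log W(zᵢ|aᵢ) - log p_{Zᵢ}(zᵢ)`. Adding the divergence densities `log (p_{Zᵢ} / Q₀)` and
subtracting `log (p_{Zⁿ} / Q₀^{⊗n})`, the two sides agree pointwise on the support. The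
inequality then follows from `D(p_{Zᵢ} ‖ Q₀) ≥ 0`. -/

open Finset Real

section PushForward

variable {X B C : Type*} [Fintype X] [DecidableEq B] [DecidableEq C]

lemma pushF_nonneg {p : X → ℝ} (hp : ∀ x, 0 ≤ p x) (f : X → B) (b : B) : 0 ≤ pushF p f b :=
  sum_nonneg fun x _ => by split <;> simp [hp x]

lemma le_pushF_apply {p : X → ℝ} (hp : ∀ x, 0 ≤ p x) (f : X → B) (x : X) :
    p x ≤ pushF p f (f x) := by
  simpa [pushF] using single_le_sum (f := fun y => if f y = f x then p y else 0)
    (fun y _ => by split <;> simp [hp y]) (mem_univ x)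

lemma pushF_apply_ne_zero {p : X → ℝ} (hp : ∀ x, 0 ≤ p x) {x : X} (hx : p x ≠ 0) (f : X → B) :
    pushF p f (f x) ≠ 0 :=
  ((lt_of_le_of_ne (hp x) hx.symm).trans_le (le_pushF_apply hp f x)).ne'

variable [Fintype B]

lemma sum_pushF_mul (p : X → ℝ) (f : X → B) (g : B → ℝ) :
    ∑ b, pushF p f b * g b = ∑ x, p x * g (f x) := by
  simp only [pushF, sum_mul, ite_mul, zero_mul]
  rw [sum_comm]
  simp

lemma IsPMF.pushF {p : X → ℝ} (hp : IsPMF p) (f : X → B) : IsPMF (pushF p f) :=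
  ⟨pushF_nonneg hp.1 f, by simpa [hp.2] using sum_pushF_mul p f fun _ => 1⟩

lemma pushF_pushF (p : X → ℝ) (f : X → B) (g : B → C) :
    pushF (pushF p f) g = pushF p (g ∘ f) := by
  funext c
  simpa [pushF, mul_ite] using sum_pushF_mul p f fun b => if g b = c then 1 else 0

lemma entF_pushF (p : X → ℝ) (f : X → B) :
    entF (pushF p f) = -∑ x, p x * log (pushF p f (f x)) := by
  rw [entF, sum_pushF_mul]

lemma klDivF_pushF (p : X → ℝ) (f : X → B) (Q : B → ℝ) :
    klDivF (pushF p f) Q = ∑ x, p x * log (pushF p f (f x) / Q (f x)) :=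
  sum_pushF_mul p f _

end PushForward

lemma klDivF_nonneg {A : Type*} [Fintype A] {P Q : A → ℝ} (hP : IsPMF P) (hQ : IsPMF Q)
    (hQpos : ∀ a, 0 < Q a) : 0 ≤ klDivF P Q := by
  have key : ∀ a, P a - Q a ≤ P a * log (P a / Q a) := fun a => by
    have := mul_le_mul_of_nonneg_left
      (self_sub_one_le_mul_log (div_nonneg (hP.1 a) (hQpos a).le)) (hQpos a).le
    rwa [mul_sub, mul_one, ← mul_assoc, mul_div_cancel₀ _ (hQpos a).ne'] at this
  calc (0 : ℝ) = ∑ a, (P a - Q a) := by rw [sum_sub_distrib, hP.2, hQ.2, sub_self]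
    _ ≤ klDivF P Q := sum_le_sum fun a _ => key a

section MutualInformation

variable {X A B : Type*} [Fintype X] [Fintype A] [Fintype B] [DecidableEq A] [DecidableEq B]

lemma mutInfoF_eq_sum_mul_log (p : A × B → ℝ) :
    mutInfoF p = ∑ x, p x * (log (p x) - log (pushF p Prod.fst x.1)
      - log (pushF p Prod.snd x.2)) := by
  rw [mutInfoF, entF_pushF, entF_pushF, entF]
  simp only [mul_sub, sum_sub_distrib]
  ring

lemma mutInfoF_pushF (p : X → ℝ) (f : X → A) (g : X → B) :
    mutInfoF (pushF p fun x => (f x, g x))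
      = ∑ x, p x * (log (pushF p (fun x => (f x, g x)) (f x, g x))
          - log (pushF p f (f x)) - log (pushF p g (g x))) := by
  rw [mutInfoF_eq_sum_mul_log, sum_pushF_mul, pushF_pushF, pushF_pushF]
  rfl

end MutualInformation

lemma sum_ite_apply_eq_prod {ι Z : Type*} [Fintype ι] [DecidableEq ι] [Fintype Z] [DecidableEq Z]
    (g : ι → Z → ℝ) (hg : ∀ j, ∑ z, g j z = 1) (i : ι) (z : Z) :
    ∑ zf : ι → Z, (if zf i = z then ∏ j, g j (zf j) else 0) = g i z := by
  let t : ι → Finset Z := fun j => if j = i then {z} else univ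
  have hfilter : univ.filter (fun zf : ι → Z => zf i = z) = Fintype.piFinset t := by
    ext zf
    simp only [mem_filter, mem_univ, true_and, Fintype.mem_piFinset, t]
    refine ⟨fun h j => ?_, fun h => by simpa using h i⟩
    split_ifs with hj
    · simp [hj, h]
    · exact mem_univ _
  rw [← sum_filter, hfilter, ← prod_univ_sum, prod_eq_single i]
  · simp [t]
  · intro j _ hj
    simp [t, hj, hg j]
  · simp

section Memoryless

variable {ι A Z : Type*} [Fintype ι] [DecidableEq ι] [Fintype A] [Fintype Z] [DecidableEq A]

def IsMemoryless (p : (ι → A) × (ι → Z) → ℝ) (W : A → Z → ℝ) : Prop :=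
  ∀ af zf, p (af, zf) = pushF p Prod.fst af * ∏ i, W (af i) (zf i)

variable {p : (ι → A) × (ι → Z) → ℝ} {W : A → Z → ℝ}

lemma IsMemoryless.apply_eq (hmem : IsMemoryless p W) (x : (ι → A) × (ι → Z)) :
    p x = pushF p Prod.fst x.1 * ∏ i, W (x.1 i) (x.2 i) :=
  hmem x.1 x.2

lemma IsMemoryless.factors_ne_zero (hmem : IsMemoryless p W) {x} (hx : p x ≠ 0) :
    pushF p Prod.fst x.1 ≠ 0 ∧ ∀ i, W (x.1 i) (x.2 i) ≠ 0 := by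
  rw [hmem.apply_eq] at hx
  obtain ⟨hA, hW⟩ := mul_ne_zero_iff.mp hx
  exact ⟨hA, fun i => prod_ne_zero_iff.mp hW i (mem_univ i)⟩

lemma IsMemoryless.log_sub_log_pushF_fst (hmem : IsMemoryless p W) {x} (hx : p x ≠ 0) :
    log (p x) - log (pushF p Prod.fst x.1) = ∑ i, log (W (x.1 i) (x.2 i)) := by
  obtain ⟨hA, hW⟩ := hmem.factors_ne_zero hx
  rw [hmem.apply_eq, log_mul hA (prod_ne_zero_iff.mpr fun i _ => hW i),
    log_prod fun i _ => hW i, add_sub_cancel_left]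

variable [DecidableEq Z]

lemma IsMemoryless.pushF_coord_pair (hmem : IsMemoryless p W) (hW : ∀ a, ∑ z, W a z = 1)
    (i : ι) (a : A) (z : Z) :
    pushF p (fun t => (t.1 i, t.2 i)) (a, z) = pushF p (fun t => t.1 i) a * W a z := by
  rw [show (fun t : (ι → A) × (ι → Z) => t.1 i) = (fun af => af i) ∘ Prod.fst from rfl,
    ← pushF_pushF]
  set pA := pushF p Prod.fst
  calc pushF p (fun t => (t.1 i, t.2 i)) (a, z)
      = ∑ af, ∑ zf, if af i = a ∧ zf i = z then p (af, zf) else 0 := by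
        simp only [pushF, Fintype.sum_prod_type, Prod.mk.injEq]
    _ = ∑ af, if af i = a then pA af * W a z else 0 := sum_congr rfl fun af _ => ?_
    _ = pushF pA (fun af => af i) a * W a z := by simp only [pushF, sum_mul, ite_mul, zero_mul]
  by_cases ha : af i = a
  · have hfactor : ∀ zf, (if af i = a ∧ zf i = z then p (af, zf) else 0)
        = pA af * if zf i = z then ∏ j, W (af j) (zf j) else 0 := fun zf => by
      simp only [ha, true_and, hmem af zf, mul_ite, mul_zero, pA]
    rw [sum_congr rfl fun zf _ => hfactor zf, ← mul_sum,
      sum_ite_apply_eq_prod _ (fun j => hW (af j)), ha, if_pos rfl]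
  · simp [ha]

lemma IsMemoryless.log_pushF_coord_pair_sub (hmem : IsMemoryless p W) (hW : ∀ a, ∑ z, W a z = 1)
    (hp : ∀ x, 0 ≤ p x) {x} (hx : p x ≠ 0) (i : ι) :
    log (pushF p (fun t => (t.1 i, t.2 i)) (x.1 i, x.2 i))
        - log (pushF p (fun t => t.1 i) (x.1 i))
      = log (W (x.1 i) (x.2 i)) := by
  rw [hmem.pushF_coord_pair hW,
    log_mul (pushF_apply_ne_zero hp hx _) ((hmem.factors_ne_zero hx).2 i), add_sub_cancel_left]

theorem IsMemoryless.mutInfoF_eq_single_letter (hmem : IsMemoryless p W) (hW : ∀ a, ∑ z, W a z = 1)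
    (hp : ∀ x, 0 ≤ p x) {Q₀ : Z → ℝ} (hQ₀ : ∀ z, 0 < Q₀ z) :
    mutInfoF p = ∑ i, mutInfoF (pushF p fun t => (t.1 i, t.2 i))
      + ∑ i, klDivF (pushF p fun t => t.2 i) Q₀
      - klDivF (pushF p Prod.snd) (fun zf => ∏ i, Q₀ (zf i)) := by
  rw [← sum_add_distrib, mutInfoF_eq_sum_mul_log p]
  simp only [mutInfoF_pushF, klDivF_pushF, ← sum_add_distrib, ← mul_add]
  rw [sum_comm]
  simp only [← mul_sum, ← sum_sub_distrib, ← mul_sub]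
  refine sum_congr rfl fun x _ => ?_
  by_cases hx : p x = 0
  · simp [hx]
  have hletter : ∀ i, log (pushF p (fun t => (t.1 i, t.2 i)) (x.1 i, x.2 i))
      - log (pushF p (fun t => t.1 i) (x.1 i)) - log (pushF p (fun t => t.2 i) (x.2 i))
      + log (pushF p (fun t => t.2 i) (x.2 i) / Q₀ (x.2 i))
      = log (W (x.1 i) (x.2 i)) - log (Q₀ (x.2 i)) := fun i => by
    rw [hmem.log_pushF_coord_pair_sub hW hp hx, log_div (pushF_apply_ne_zero hp hx _) (hQ₀ _).ne']
    ring
  have hblock : log (pushF p Prod.snd x.2 / ∏ i, Q₀ (x.2 i))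
      = log (pushF p Prod.snd x.2) - ∑ i, log (Q₀ (x.2 i)) := by
    rw [log_div (pushF_apply_ne_zero hp hx _) (prod_ne_zero_iff.mpr fun i _ => (hQ₀ _).ne'),
      log_prod fun i _ => (hQ₀ _).ne']
  rw [hmem.log_sub_log_pushF_fst hx, sum_congr rfl fun i _ => hletter i, hblock,
    sum_sub_distrib]
  ring

end Memoryless

theorem single_letterization_general {A Z : Type*} [Fintype A] [Fintype Z]
    [DecidableEq A] [DecidableEq Z]
    (n : ℕ)
    (W : A → Z → ℝ) (hW : ∀ a, IsPMF (W a))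
    (Q₀ : Z → ℝ) (hQ₀ : IsPMF Q₀) (hQ₀pos : ∀ z, 0 < Q₀ z)
    (p : (Fin n → A) × (Fin n → Z) → ℝ) (hp : IsPMF p)
    (hmem : ∀ af zf, p (af, zf) = pushF p Prod.fst af * ∏ i, W (af i) (zf i)) :
    mutInfoF p
        = (∑ i : Fin n, mutInfoF (pushF p (fun t => (t.1 i, t.2 i))))
            + (∑ i : Fin n, klDivF (pushF p (fun t => t.2 i)) Q₀)
            - klDivF (pushF p Prod.snd) (fun zf => ∏ i, Q₀ (zf i))
      ∧ ∀ δ : ℝ, klDivF (pushF p Prod.snd) (fun zf => ∏ i, Q₀ (zf i)) ≤ δ →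
          (∑ i : Fin n, mutInfoF (pushF p (fun t => (t.1 i, t.2 i)))) - δ ≤ mutInfoF p := by
  have identity := IsMemoryless.mutInfoF_eq_single_letter hmem (fun a => (hW a).2) hp.1 hQ₀pos
  refine ⟨identity, fun δ hδ => ?_⟩
  have hletters : 0 ≤ ∑ i : Fin n, klDivF (pushF p fun t => t.2 i) Q₀ :=
    sum_nonneg fun i _ => klDivF_nonneg (hp.pushF _) hQ₀ hQ₀pos
  linarith

/-- Single-letterization identity from the converse proof of Theorem 1 (equations (58)–(66)):
for a memoryless channel `W` and a joint law `p` of `(Aⁿ, Zⁿ)` with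
`p(aⁿ,zⁿ) = p_{Aⁿ}(aⁿ)·∏ᵢ W(zᵢ|aᵢ)`,
`I(Aⁿ;Zⁿ) = ∑ᵢ I(Aᵢ;Zᵢ) + ∑ᵢ D(p_{Zᵢ}‖Q₀) − D(p_{Zⁿ}‖Q₀^{⊗n})`; in particular, if
`D(p_{Zⁿ}‖Q₀^{⊗n}) ≤ δ` then `I(Aⁿ;Zⁿ) ≥ ∑ᵢ I(Aᵢ;Zᵢ) − δ`. -/
theorem single_letterization {A Z : Type*} [Fintype A] [Fintype Z]
    [Nonempty A] [Nonempty Z] [DecidableEq A] [DecidableEq Z]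
    (n : ℕ) (hn : 1 ≤ n)
    (W : A → Z → ℝ) (hW : ∀ a, IsPMF (W a))
    (Q₀ : Z → ℝ) (hQ₀ : IsPMF Q₀) (hQ₀pos : ∀ z, 0 < Q₀ z)
    (p : (Fin n → A) × (Fin n → Z) → ℝ) (hp : IsPMF p)
    (hmem : ∀ af zf, p (af, zf) = pushF p Prod.fst af * ∏ i, W (af i) (zf i)) :
    mutInfoF p
        = (∑ i : Fin n, mutInfoF (pushF p (fun t => (t.1 i, t.2 i))))
            + (∑ i : Fin n, klDivF (pushF p (fun t => t.2 i)) Q₀)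
            - klDivF (pushF p Prod.snd) (fun zf => ∏ i, Q₀ (zf i))
      ∧ ∀ δ : ℝ, klDivF (pushF p Prod.snd) (fun zf => ∏ i, Q₀ (zf i)) ≤ δ →
          (∑ i : Fin n, mutInfoF (pushF p (fun t => (t.1 i, t.2 i)))) - δ ≤ mutInfoF p :=
  single_letterization_general n W hW Q₀ hQ₀ hQ₀pos p hp hmem
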